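/- arXiv:2307.06907 — 5 statements merged into one kernel-verified Lean document; each statement's English description precedes it below -/
import Mathlib

section
/- For every partition regular function ρ : F → [Λ]^ω and every F ∈ F, there exists E ∈ F with E ⊆ F such that for every finite set L ⊆ Λ there is a finite set K ⊆ Ω with ρ(E \ K) ⊆ ρ(E) \ L. -/
/-- An ideal on a countably infinite set `Λ`: a nonempty family of subsets closed under
subsets and finite unions, containing all finite sets, with `Λ` itself not a member. -/
def IsIdealOn (Λ : Type*) (I : Set (Set Λ)) : Prop :=
  I.Nonempty ∧
  (∀ A B : Set Λ, A ⊆ B → B ∈ I → A ∈ I) ∧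
  (∀ A B : Set Λ, A ∈ I → B ∈ I → A ∪ B ∈ I) ∧
  (∀ A : Set Λ, A.Finite → A ∈ I) ∧
  (Set.univ : Set Λ) ∉ I

/-- A partition regular function `ρ : F → [Λ]^ω`, where `F` is a nonempty family of
infinite subsets of `Ω` closed under removal of finite sets; `ρ` takes infinite values
and satisfies monotonicity (M), partition regularity (R) and finite support (S). -/
structure IsPartitionRegular {Ω Λ : Type*} (F : Set (Set Ω)) (ρ : Set Ω → Set Λ) : Prop where
  nonempty : F.Nonempty
  mem_infinite : ∀ E ∈ F, E.Infinite
  diff_finite_mem : ∀ E ∈ F, ∀ K : Set Ω, K.Finite → E \ K ∈ F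
  rho_infinite : ∀ E ∈ F, (ρ E).Infinite
  mono : ∀ E ∈ F, ∀ G ∈ F, E ⊆ G → ρ E ⊆ ρ G
  part : ∀ G ∈ F, ∀ A B : Set Λ, ρ G = A ∪ B → ∃ E ∈ F, ρ E ⊆ A ∨ ρ E ⊆ B
  supp : ∀ G ∈ F, ∃ E ∈ F, E ⊆ G ∧ ∀ a ∈ ρ E, ∃ K : Set Ω, K.Finite ∧ a ∉ ρ (E \ K)

/-- The ideal `I_ρ = {A ⊆ Λ : ∀ F ∈ F, ρ(F) ⊄ A}` associated with `ρ`. -/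
def assocIdeal {Ω Λ : Type*} (F : Set (Set Ω)) (ρ : Set Ω → Set Λ) : Set (Set Λ) :=
  {A : Set Λ | ∀ E ∈ F, ¬ ρ E ⊆ A}

namespace IsPartitionRegular

variable {Ω Λ : Type*} {F : Set (Set Ω)} {ρ : Set Ω → Set Λ}

theorem rho_diff_subset_rho_diff (h : IsPartitionRegular F ρ) {E K K' : Set Ω} (hE : E ∈ F)
    (hK : K.Finite) (hK' : K'.Finite) (hKK' : K ⊆ K') : ρ (E \ K') ⊆ ρ (E \ K) :=
  h.mono _ (h.diff_finite_mem E hE K' hK') _ (h.diff_finite_mem E hE K hK)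
    (Set.sdiff_subset_sdiff_right hKK')

theorem rho_diff_subset (h : IsPartitionRegular F ρ) {E K : Set Ω} (hE : E ∈ F)
    (hK : K.Finite) : ρ (E \ K) ⊆ ρ E :=
  h.mono _ (h.diff_finite_mem E hE K hK) E hE Set.sdiff_subset

/-- Removing the union of the finite sets that witness (S) for the points of `L ∩ ρ E` removes
all of `L` from `ρ E` at once, by monotonicity. -/
theorem exists_finite_rho_diff_subset_diff (h : IsPartitionRegular F ρ) {E : Set Ω} (hE : E ∈ F)
    (hsupp : ∀ a ∈ ρ E, ∃ K : Set Ω, K.Finite ∧ a ∉ ρ (E \ K)) {L : Set Λ} (hL : L.Finite) :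
    ∃ K : Set Ω, K.Finite ∧ ρ (E \ K) ⊆ ρ E \ L := by
  choose! K hK_finite hK_not_mem using hsupp
  have hS : (L ∩ ρ E).Finite := hL.inter_of_left _
  have hU : (⋃ a ∈ L ∩ ρ E, K a).Finite := hS.biUnion fun a ha => hK_finite a ha.2
  refine ⟨⋃ a ∈ L ∩ ρ E, K a, hU, fun b hb => ?_⟩
  have hbE : b ∈ ρ E := h.rho_diff_subset hE hU hb
  refine ⟨hbE, fun hbL => hK_not_mem b hbE ?_⟩
  exact h.rho_diff_subset_rho_diff hE (hK_finite b hbE) hU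
    (Set.subset_biUnion_of_mem (u := K) ⟨hbL, hbE⟩) hb

end IsPartitionRegular

theorem finite_support_version_general {Ω Λ : Type*}
    (F : Set (Set Ω)) (ρ : Set Ω → Set Λ) (h : IsPartitionRegular F ρ) :
    ∀ G ∈ F, ∃ E ∈ F, E ⊆ G ∧
      ∀ L : Set Λ, L.Finite → ∃ K : Set Ω, K.Finite ∧ ρ (E \ K) ⊆ ρ E \ L := by
  intro G hG
  obtain ⟨E, hE, hEG, hsupp⟩ := h.supp G hG
  exact ⟨E, hE, hEG, fun L hL => h.exists_finite_rho_diff_subset_diff hE hsupp hL⟩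

/-- For every partition regular `ρ : F → [Λ]^ω` and every `F ∈ F` there is `E ∈ F` with
`E ⊆ F` such that for every finite `L ⊆ Λ` there is a finite `K ⊆ Ω` with
`ρ(E \ K) ⊆ ρ(E) \ L`. -/
theorem finite_support_version {Ω Λ : Type*} [Countable Ω] [Infinite Ω] [Countable Λ] [Infinite Λ]
    (F : Set (Set Ω)) (ρ : Set Ω → Set Λ) (h : IsPartitionRegular F ρ) :
    ∀ G ∈ F, ∃ E ∈ F, E ⊆ G ∧
      ∀ L : Set Λ, L.Finite → ∃ K : Set Ω, K.Finite ∧ ρ (E \ K) ⊆ ρ E \ L :=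
  finite_support_version_general F ρ h
end

section
/- Let L = {A ∈ [ℕ]^ω : for all n, e_A(n+1) − e_A(n) > e_A(n)}, where e_A is the increasing enumeration of A. Then L is a closed subset of [ℕ]^ω and the restriction Δ↾L of the difference function is continuous on L. -/
/-- The characteristic function of a set, identifying `Set X` with `X → Bool`
(i.e. with `2^X`). -/
noncomputable def chi {X : Type*} (A : Set X) : X → Bool :=
  fun x => @decide (x ∈ A) (Classical.propDecidable _)

/-- The product (Cantor) topology on `P(X) = 2^X`, pulled back along the
identification of sets with their characteristic functions. -/
noncomputable instance setTopology (X : Type*) : TopologicalSpace (Set X) :=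
  TopologicalSpace.induced chi inferInstance

/-- `Δ(E)`: all positive differences of distinct elements of `E`. -/
def Del (E : Set ℕ) : Set ℕ :=
  {d : ℕ | ∃ a ∈ E, ∃ b ∈ E, b < a ∧ d = a - b}

/-- The family `L` of infinite sets whose increasing enumeration `e_A` satisfies
`e_A(n+1) − e_A(n) > e_A(n)` for all `n`. -/
def Lfam : Set {A : Set ℕ // A.Infinite} :=
  {A | ∀ n : ℕ,
    Nat.nth (· ∈ A.val) n < Nat.nth (· ∈ A.val) (n + 1) - Nat.nth (· ∈ A.val) n}

/-!
A set `A` with increasing enumeration `e` lies in `L` iff `2 e(n) < e(n+1)` for all `n`, i.e. iff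
`2b < a` for all `b < a` in `A`. Each instance of this pairwise condition reads only two
coordinates of `A`, so `L` is closed. For such `A` a difference `d = a - b` always has `b < d`, so
`d ∈ Δ(A)` iff `b, b + d ∈ A` for some `b < d`: on `L`, `Δ` agrees with a map each of whose
coordinates depends on finitely many coordinates of `A`, hence with a continuous map.
-/

theorem continuous_set_iff {X Y : Type*} [TopologicalSpace Y] {f : Y → Set X} :
    Continuous f ↔ ∀ x, IsClopen {y | x ∈ f y} := by
  simp only [continuous_induced_rng, continuous_pi_iff, continuous_bool_rng true]
  simp [chi, Set.preimage]

theorem isClopen_setOf_mem {X : Type*} (x : X) : IsClopen {A : Set X | x ∈ A} :=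
  continuous_set_iff.1 continuous_id x

def DoublingGaps (A : Set ℕ) : Prop :=
  ∀ a ∈ A, ∀ b ∈ A, b < a → 2 * b < a

theorem isClosed_setOf_doublingGaps : IsClosed {A : Set ℕ | DoublingGaps A} := by
  simp only [DoublingGaps, Set.ofPred_forall]
  refine isClosed_iInter fun a => isClosed_imp (isClopen_setOf_mem a).isOpen ?_
  simp only [Set.ofPred_forall]
  exact isClosed_iInter fun b => isClosed_imp (isClopen_setOf_mem b).isOpen isClosed_const

theorem Monotone.two_mul_lt_succ_iff {f : ℕ → ℕ} (hf : Monotone f) :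
    (∀ n, 2 * f n < f (n + 1)) ↔ ∀ i j, i < j → 2 * f i < f j :=
  ⟨fun h i _ hij => (h i).trans_le (hf hij), fun h n => h n (n + 1) n.lt_succ_self⟩

theorem mem_Lfam_iff {A : {A : Set ℕ // A.Infinite}} : A ∈ Lfam ↔ DoublingGaps A.val := by
  have hA : (Set.ofPred (· ∈ A.val)).Infinite := A.prop
  have hrange : Set.range (Nat.nth (· ∈ A.val)) = A.val := Nat.range_nth_of_infinite hA
  have hmono := Nat.nth_strictMono hA
  calc A ∈ Lfam ↔ ∀ n, 2 * Nat.nth (· ∈ A.val) n < Nat.nth (· ∈ A.val) (n + 1) :=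
        forall_congr' fun n => by omega
    _ ↔ DoublingGaps A.val := by
        rw [hmono.monotone.two_mul_lt_succ_iff, DoublingGaps]
        conv_rhs => rw [← hrange]
        simp only [Set.forall_mem_range, hmono.lt_iff_lt]
        exact forall_comm

theorem Del_eq_of_doublingGaps {A : Set ℕ} (hA : DoublingGaps A) :
    Del A = {d | ∃ b < d, b ∈ A ∧ b + d ∈ A} := by
  ext d
  constructor
  · rintro ⟨a, ha, b, hb, hba, rfl⟩
    exact ⟨b, by have := hA a ha b hb hba; omega, hb, by rwa [Nat.add_sub_cancel' hba.le]⟩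
  · rintro ⟨b, hbd, hb, hbd'⟩
    exact ⟨b + d, hbd', b, hb, by omega, by omega⟩

theorem continuous_setOf_exists_lt_mem_add_mem :
    Continuous fun A : Set ℕ => {d | ∃ b < d, b ∈ A ∧ b + d ∈ A} := by
  refine continuous_set_iff.2 fun d => ?_
  have hunion : {A : Set ℕ | d ∈ {d | ∃ b < d, b ∈ A ∧ b + d ∈ A}} =
      ⋃ b ∈ Set.Iio d, {A | b ∈ A} ∩ {A | b + d ∈ A} := by
    ext
    simp only [Set.mem_ofPred_eq, Set.mem_iUnion, Set.mem_inter_iff, Set.mem_Iio, exists_prop]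
  rw [hunion]
  exact (Set.finite_Iio d).isClopen_biUnion fun b _ =>
    (isClopen_setOf_mem b).inter (isClopen_setOf_mem (b + d))

/-- `L` is closed in `[ℕ]^ω` and the restriction `Δ↾L` is continuous. -/
theorem Lfam_closed_and_Del_continuousOn :
    IsClosed Lfam ∧
      ContinuousOn (fun A : {A : Set ℕ // A.Infinite} => Del A.val) Lfam := by
  have hL : Lfam = Subtype.val ⁻¹' {A | DoublingGaps A} := Set.ext fun _ => mem_Lfam_iff
  refine ⟨hL ▸ isClosed_setOf_doublingGaps.preimage continuous_subtype_val, ?_⟩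
  exact (continuous_setOf_exists_lt_mem_add_mem.comp continuous_subtype_val).continuousOn.congr
    fun A hA => Del_eq_of_doublingGaps (mem_Lfam_iff.1 hA)
end

section
/- Every F_σ ideal on a countably infinite set Λ is P⁺: for every ⊆-decreasing sequence (A_n) of I-positive sets there exists an I-positive set B with B ⊆* A_n for every n. -/
/-!
Write `I = ⋃ Cₙ` with `Cₙ` closed and pass to the downward closures `Dₙ` of the `Cₙ`: they are
still closed (the image of the compact set `Cₙ × 2^Λ` under the continuous map `∩`) and, `I`
being hereditary, still contained in `I`. Since `A ∩ s → A` along finite `s`, a closed family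
missing `Aₙ` misses some finite `Fₙ ⊆ Aₙ`. Then `B = ⋃ Fₙ` is positive, as `B ∈ Cₙ` would put
`Fₙ ∈ Dₙ`, and `B \ Aₙ ⊆ F₀ ∪ ⋯ ∪ Fₙ₋₁` because the `Aₙ` decrease.
-/

open Set Filter Topology

section CantorTopology

variable {X : Type*}

lemma chi_eq_true {A : Set X} {x : X} : chi A x = true ↔ x ∈ A := by
  simp [chi]

lemma chi_inter (A B : Set X) : chi (A ∩ B) = fun x => chi A x && chi B x := by
  funext x
  rw [Bool.eq_iff_iff]
  simp only [Bool.and_eq_true, chi_eq_true, mem_inter_iff]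

lemma isInducing_chi : IsInducing (chi (X := X)) := ⟨rfl⟩

noncomputable def chiEquiv (X : Type*) : Set X ≃ (X → Bool) where
  toFun := chi
  invFun f := {x | f x = true}
  left_inv A := by ext x; simp [chi_eq_true]
  right_inv f := by funext x; cases h : f x <;> simp [chi, h]

noncomputable def chiHomeomorph (X : Type*) : Set X ≃ₜ (X → Bool) :=
  (chiEquiv X).toHomeomorphOfIsInducing isInducing_chi

instance : T2Space (Set X) := (chiHomeomorph X).symm.t2Space

instance : CompactSpace (Set X) := (chiHomeomorph X).symm.compactSpace

lemma continuous_inter_set : Continuous fun p : Set X × Set X => p.1 ∩ p.2 := by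
  refine continuous_induced_rng.2 ?_
  simp only [Function.comp_def, chi_inter]
  refine continuous_pi fun x => ?_
  have hchi : Continuous fun A : Set X => chi A x :=
    (continuous_apply x).comp (continuous_induced_dom (f := chi))
  exact (continuous_of_discreteTopology (f := fun q : Bool × Bool => q.1 && q.2)).comp
    ((hchi.comp continuous_fst).prodMk (hchi.comp continuous_snd))

lemma isClosed_lowerClosure_of_isClosed {K : Set (Set X)} (hK : IsClosed K) :
    IsClosed (lowerClosure K : Set (Set X)) := by
  have himage : (lowerClosure K : Set (Set X)) =
      (fun p : Set X × Set X => p.1 ∩ p.2) '' (K ×ˢ univ) := by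
    ext Y
    simp only [SetLike.mem_coe, mem_lowerClosure, mem_image, mem_prod, mem_univ, and_true,
      Prod.exists]
    constructor
    · rintro ⟨Z, hZ, hYZ⟩
      exact ⟨Z, Y, hZ, inter_eq_right.2 hYZ⟩
    · rintro ⟨Z, W, hZ, rfl⟩
      exact ⟨Z, hZ, inter_subset_left⟩
  rw [himage]
  exact ((hK.isCompact.prod isCompact_univ).image continuous_inter_set).isClosed

lemma tendsto_inter_finset_atTop (A : Set X) :
    Tendsto (fun s : Finset X => A ∩ s) atTop (𝓝 A) := by
  refine isInducing_chi.tendsto_nhds_iff.2 (tendsto_pi_nhds.2 fun x => ?_)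
  refine tendsto_const_nhds.congr' ?_
  filter_upwards [eventually_ge_atTop {x}] with s hs
  have hx : x ∈ (s : Set X) := Finset.singleton_subset_iff.1 hs
  simp only [Function.comp_apply, chi_inter]
  rw [show chi (s : Set X) x = true from chi_eq_true.2 hx, Bool.and_true]

lemma IsClosed.exists_finite_subset_notMem {K : Set (Set X)} (hK : IsClosed K) {A : Set X}
    (hA : A ∉ K) : ∃ F ⊆ A, F.Finite ∧ F ∉ K := by
  by_contra! h
  exact hA <| hK.mem_of_tendsto (tendsto_inter_finset_atTop A) <|
    Eventually.of_forall fun s => h _ inter_subset_left (s.finite_toSet.inter_of_right A)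

end CantorTopology

lemma finite_iUnion_diff_of_antitone {X : Type*} {A F : ℕ → Set X} (hA : Antitone A)
    (hFA : ∀ n, F n ⊆ A n) (hF : ∀ n, (F n).Finite) (n : ℕ) : ((⋃ m, F m) \ A n).Finite := by
  refine ((finite_lt_nat n).biUnion fun m _ => hF m).subset ?_
  rintro x ⟨hx, hxA⟩
  obtain ⟨m, hm⟩ := mem_iUnion.1 hx
  exact mem_biUnion (not_le.1 fun hnm => hxA (hA hnm (hFA m hm))) hm

theorem Fsigma_ideal_Pplus_general {Λ : Type*}
    (I : Set (Set Λ)) (hI : IsIdealOn Λ I)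
    (hFσ : ∃ C : ℕ → Set (Set Λ), (∀ n, IsClosed (C n)) ∧ I = ⋃ n, C n) :
    ∀ A : ℕ → Set Λ, (∀ n, A n ∉ I) → (∀ n, A (n + 1) ⊆ A n) →
      ∃ B : Set Λ, B ∉ I ∧ ∀ n, (B \ A n).Finite := by
  intro A hA hmono
  obtain ⟨C, hC, rfl⟩ := hFσ
  have hlower : ∀ n, (lowerClosure (C n) : Set (Set Λ)) ⊆ ⋃ m, C m := by
    rintro n Y ⟨Z, hZ, hYZ⟩
    exact hI.2.1 Y Z hYZ (mem_iUnion.2 ⟨n, hZ⟩)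
  have hfin : ∀ n, ∃ F ⊆ A n, F.Finite ∧ F ∉ lowerClosure (C n) := fun n =>
    (isClosed_lowerClosure_of_isClosed (hC n)).exists_finite_subset_notMem
      fun h => hA n (hlower n h)
  choose F hFA hF hFC using hfin
  refine ⟨⋃ m, F m, fun hB => ?_,
    finite_iUnion_diff_of_antitone (antitone_nat_of_succ_le hmono) hFA hF⟩
  obtain ⟨n, hn⟩ := mem_iUnion.1 hB
  exact hFC n ⟨_, hn, subset_iUnion F n⟩

/-- Every `F_σ` ideal on a countably infinite set `Λ` is `P⁺`: for every `⊆`-decreasing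
sequence `(A_n)` of `I`-positive sets there is an `I`-positive `B` with `B ⊆* A_n`
for every `n`. -/
theorem Fsigma_ideal_Pplus {Λ : Type*} [Countable Λ] [Infinite Λ]
    (I : Set (Set Λ)) (hI : IsIdealOn Λ I)
    (hFσ : ∃ C : ℕ → Set (Set Λ), (∀ n, IsClosed (C n)) ∧ I = ⋃ n, C n) :
    ∀ A : ℕ → Set Λ, (∀ n, A n ∉ I) → (∀ n, A (n + 1) ⊆ A n) →
      ∃ B : Set Λ, B ∉ I ∧ ∀ n, (B \ A n).Finite :=
  Fsigma_ideal_Pplus_general I hI hFσ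
end

section
/- The density-zero ideal I_d = {A ⊆ ℕ : limsup_{n→∞} |A ∩ n|/n = 0} is not P⁺: there exists a ⊆-decreasing sequence (B_n) of sets of positive upper density such that every set C with C ⊆* B_n for all n has upper density zero. -/
/-!
The multiples of `2 ^ n` have density `2⁻ⁿ > 0` and decrease in `n`. Upper density does not see
finite sets, so a set `C` almost contained in every one of them has upper density at most `2⁻ⁿ`
for every `n`, hence zero.
-/

open Classical in
/-- The upper asymptotic density `d̄(A) = limsup_{n→∞} |A ∩ {0,…,n−1}|/n`. -/
noncomputable def upperDensity (A : Set ℕ) : ℝ :=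
  Filter.limsup (fun n : ℕ => (((Finset.range n).filter (· ∈ A)).card : ℝ) / n)
    Filter.atTop

open Filter Topology Finset

-- `upperDensity A` is definitionally `limsup (densityRatio A) atTop`.
open Classical in
noncomputable def densityRatio (A : Set ℕ) (N : ℕ) : ℝ :=
  #{m ∈ range N | m ∈ A} / N

lemma densityRatio_nonneg (A : Set ℕ) (N : ℕ) : 0 ≤ densityRatio A N := by
  unfold densityRatio; positivity

lemma densityRatio_le_one (A : Set ℕ) (N : ℕ) : densityRatio A N ≤ 1 := by
  classical
  unfold densityRatio
  refine div_le_one_of_le₀ ?_ N.cast_nonneg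
  exact_mod_cast (card_filter_le _ _).trans (card_range N).le

lemma isBoundedUnder_le_densityRatio (A : Set ℕ) :
    IsBoundedUnder (· ≤ ·) atTop (densityRatio A) :=
  isBoundedUnder_of ⟨1, densityRatio_le_one A⟩

lemma isBoundedUnder_ge_densityRatio (A : Set ℕ) :
    IsBoundedUnder (· ≥ ·) atTop (densityRatio A) :=
  isBoundedUnder_of ⟨0, densityRatio_nonneg A⟩

lemma upperDensity_nonneg (A : Set ℕ) : 0 ≤ upperDensity A :=
  le_limsup_of_frequently_le (Frequently.of_forall (densityRatio_nonneg A))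
    (isBoundedUnder_le_densityRatio A)

lemma densityRatio_le_add_of_diff_finite {A B : Set ℕ} (h : (A \ B).Finite) (N : ℕ) :
    densityRatio A N ≤ densityRatio B N + (#h.toFinset : ℝ) / N := by
  classical
  have hsub : {m ∈ range N | m ∈ A} ⊆ {m ∈ range N | m ∈ B} ∪ h.toFinset := by
    intro m hm
    by_cases hB : m ∈ B <;> simp_all
  have hcard : (#{m ∈ range N | m ∈ A} : ℝ) ≤ #{m ∈ range N | m ∈ B} + #h.toFinset := by
    exact_mod_cast (card_le_card hsub).trans (card_union_le _ _)
  unfold densityRatio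
  rw [← add_div]
  exact div_le_div_of_nonneg_right hcard N.cast_nonneg

theorem upperDensity_le_of_diff_finite {A B : Set ℕ} (h : (A \ B).Finite) :
    upperDensity A ≤ upperDensity B := by
  have hK := tendsto_const_div_atTop_nhds_zero_nat (𝕜 := ℝ) h.toFinset.card
  calc upperDensity A
      ≤ limsup (densityRatio B + fun N : ℕ => (h.toFinset.card : ℝ) / N) atTop :=
        limsup_le_limsup (Eventually.of_forall (densityRatio_le_add_of_diff_finite h))
          (isBoundedUnder_ge_densityRatio A).isCoboundedUnder_le
          (isBoundedUnder_le_add (isBoundedUnder_le_densityRatio B) hK.isBoundedUnder_le)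
    _ ≤ upperDensity B + limsup (fun N : ℕ => (h.toFinset.card : ℝ) / N) atTop :=
        limsup_add_le (isBoundedUnder_ge_densityRatio B) (isBoundedUnder_le_densityRatio B)
          hK.isCoboundedUnder_le hK.isBoundedUnder_le
    _ = upperDensity B := by rw [hK.limsup_eq, add_zero]

lemma card_range_filter_dvd_bounds {d : ℕ} (hd : 0 < d) (N : ℕ) :
    N / d ≤ #{m ∈ range N | d ∣ m} ∧ #{m ∈ range N | d ∣ m} ≤ N / d + 1 := by
  have h := Nat.count_modEq_card N hd 0
  simp only [Nat.modEq_zero_iff_dvd, Nat.count_eq_card_filter_range] at h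
  split_ifs at h <;> omega

lemma abs_densityRatio_multiples_sub_le {d N : ℕ} (hd : 0 < d) (hN : 0 < N) :
    |densityRatio {m | d ∣ m} N - (d : ℝ)⁻¹| ≤ 1 / N := by
  obtain ⟨hlo, hhi⟩ := card_range_filter_dvd_bounds hd N
  have hq_le : ((N / d : ℕ) : ℝ) ≤ N / d := Nat.cast_div_le
  have hq_gt : (N : ℝ) / d < (N / d : ℕ) + 1 := by
    rw [← Nat.floor_div_eq_div (K := ℝ)]
    exact Nat.lt_floor_add_one _
  have hc : |(#{m ∈ range N | d ∣ m} : ℝ) - N / d| ≤ 1 := by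
    rw [abs_sub_le_iff]
    constructor
    · have : (#{m ∈ range N | d ∣ m} : ℝ) ≤ (N / d : ℕ) + 1 := by exact_mod_cast hhi
      linarith
    · have : ((N / d : ℕ) : ℝ) ≤ #{m ∈ range N | d ∣ m} := by exact_mod_cast hlo
      linarith
  have hN' : (0 : ℝ) < N := by exact_mod_cast hN
  calc |densityRatio {m | d ∣ m} N - (d : ℝ)⁻¹|
      = |(#{m ∈ range N | d ∣ m} : ℝ) - N / d| / N := by
        simp only [densityRatio, Set.mem_ofPred_eq]
        rw [← abs_of_pos hN', ← abs_div, abs_of_pos hN']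
        congr 1
        field_simp
    _ ≤ 1 / N := by gcongr

theorem tendsto_densityRatio_multiples {d : ℕ} (hd : 0 < d) :
    Tendsto (densityRatio {m | d ∣ m}) atTop (𝓝 (d : ℝ)⁻¹) := by
  rw [tendsto_iff_norm_sub_tendsto_zero]
  refine squeeze_zero' (Eventually.of_forall fun N => norm_nonneg _) ?_
    (tendsto_const_div_atTop_nhds_zero_nat 1)
  filter_upwards [eventually_gt_atTop 0] with N hN
  exact abs_densityRatio_multiples_sub_le hd hN

theorem upperDensity_multiples {d : ℕ} (hd : 0 < d) :
    upperDensity {m | d ∣ m} = (d : ℝ)⁻¹ :=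
  (tendsto_densityRatio_multiples hd).limsup_eq

/-- The density-zero ideal is not `P⁺`: there is a `⊆`-decreasing sequence `(B_n)` of
sets of positive upper density such that every `C` with `C ⊆* B_n` for all `n` has
upper density zero. -/
theorem densityZero_not_Pplus :
    ∃ B : ℕ → Set ℕ,
      (∀ n, B (n + 1) ⊆ B n) ∧
      (∀ n, 0 < upperDensity (B n)) ∧
      ∀ C : Set ℕ, (∀ n, (C \ B n).Finite) → upperDensity C = 0 := by
  refine ⟨fun n => {m | 2 ^ n ∣ m}, fun n m hm => (pow_dvd_pow 2 n.le_succ).trans hm,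
    fun n => ?_, fun C hC => ?_⟩
  · rw [upperDensity_multiples (by positivity)]
    positivity
  · have hle : ∀ n, upperDensity C ≤ (1 / 2 : ℝ) ^ n := fun n => by
      simpa [upperDensity_multiples] using upperDensity_le_of_diff_finite (hC n)
    exact le_antisymm
      (ge_of_tendsto (tendsto_pow_atTop_nhds_zero_of_lt_one (by norm_num) (by norm_num))
        (Eventually.of_forall hle))
      (upperDensity_nonneg C)
end

section
/- The Hindman ideal H is not P⁻(ω): the sets A_k = {2^k(2n+1) : n ∈ ω} form a partition of positive integers such that each A_k ∈ H, but every IP-set B (i.e., B ∉ H) has infinite intersection with some A_k. -/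
/-!
`A_k` is the set of positive integers of 2-adic valuation `k`. Adding two elements of `A_k`
raises the valuation, so no `FS(D)` with `|D| ≥ 2` fits inside one `A_k`. Conversely, let
`D` be infinite. Either some `A_k` contains infinitely many elements of `D ⊆ FS(D)`, or every
valuation occurs only finitely often in `D`; then fixing `d₀ ∈ D \ {0}` of valuation `k`,
the infinitely many `d ∈ D` of valuation above `k` give infinitely many sums `d₀ + d ∈ A_k`.
-/

def FS (D : Set ℕ) : Set ℕ :=
  {m : ℕ | ∃ s : Finset ℕ, s.Nonempty ∧ ↑s ⊆ D ∧ m = ∑ i ∈ s, i}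

def HindmanIdeal : Set (Set ℕ) :=
  {A : Set ℕ | ¬ ∃ D : Set ℕ, D.Infinite ∧ FS D ⊆ A}

def Awit (k : ℕ) : Set ℕ :=
  {m : ℕ | ∃ n : ℕ, m = 2 ^ k * (2 * n + 1)}

lemma subset_FS (D : Set ℕ) : D ⊆ FS D :=
  fun d hd => ⟨{d}, Finset.singleton_nonempty d, by simpa using hd, by simp⟩

lemma add_mem_FS {D : Set ℕ} {d e : ℕ} (hd : d ∈ D) (he : e ∈ D) (hne : d ≠ e) :
    d + e ∈ FS D := by
  refine ⟨{d, e}, Finset.insert_nonempty _ _, ?_, (Finset.sum_pair (f := id) hne).symm⟩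
  simpa [Set.insert_subset_iff] using ⟨hd, he⟩

lemma mem_Awit_iff {m k : ℕ} : m ∈ Awit k ↔ m ≠ 0 ∧ m.factorization 2 = k := by
  constructor
  · rintro ⟨n, rfl⟩
    have hodd : ¬ 2 ∣ 2 * n + 1 := by omega
    refine ⟨by positivity, ?_⟩
    rw [Nat.factorization_mul (by positivity) (by omega)]
    simp [Nat.factorization_eq_zero_of_not_dvd hodd, Nat.prime_two.factorization_pow]
  · rintro ⟨hm, rfl⟩
    have hodd : ¬ 2 ∣ m / 2 ^ m.factorization 2 := Nat.not_dvd_ordCompl Nat.prime_two hm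
    refine ⟨m / 2 ^ m.factorization 2 / 2, ?_⟩
    rw [show 2 * (m / 2 ^ m.factorization 2 / 2) + 1 = m / 2 ^ m.factorization 2 by omega,
      Nat.ordProj_mul_ordCompl_eq_self]

lemma iUnion_Awit : ⋃ k, Awit k = {m : ℕ | 0 < m} := by
  ext m
  simp only [Set.mem_iUnion, Set.mem_ofPred_eq, mem_Awit_iff, exists_and_left, exists_eq', and_true,
    Nat.pos_iff_ne_zero]

lemma pairwise_disjoint_Awit : Pairwise (Function.onFun Disjoint Awit) := by
  intro k l hkl
  refine Set.disjoint_left.2 fun m hk hl => hkl ?_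
  rw [← (mem_Awit_iff.1 hk).2, (mem_Awit_iff.1 hl).2]

lemma add_notMem_Awit {a b k : ℕ} (ha : a ∈ Awit k) (hb : b ∈ Awit k) : a + b ∉ Awit k := by
  obtain ⟨x, rfl⟩ := ha
  obtain ⟨y, rfl⟩ := hb
  rintro ⟨z, hz⟩
  have : (2 * x + 1) + (2 * y + 1) = 2 * z + 1 :=
    Nat.eq_of_mul_eq_mul_left (pow_pos two_pos k) (by rw [mul_add]; exact hz)
  omega

lemma add_mem_Awit_of_lt {a b k l : ℕ} (ha : a ∈ Awit k) (hb : b ∈ Awit l) (hkl : k < l) :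
    a + b ∈ Awit k := by
  obtain ⟨x, rfl⟩ := ha
  obtain ⟨y, rfl⟩ := hb
  obtain ⟨i, rfl⟩ := Nat.exists_eq_add_of_lt hkl
  exact ⟨x + 2 ^ i * (2 * y + 1), by ring⟩

lemma Awit_mem_HindmanIdeal (k : ℕ) : Awit k ∈ HindmanIdeal := by
  rintro ⟨D, hD, hFS⟩
  obtain ⟨d, hd, e, he, hne⟩ := hD.nontrivial
  exact add_notMem_Awit (hFS (subset_FS D hd)) (hFS (subset_FS D he))
    (hFS (add_mem_FS hd he hne))

theorem exists_infinite_FS_inter_Awit {D : Set ℕ} (hD : D.Infinite) :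
    ∃ k, (FS D ∩ Awit k).Infinite := by
  by_cases h : ∃ k, (D ∩ Awit k).Infinite
  · obtain ⟨k, hk⟩ := h
    exact ⟨k, hk.mono (Set.inter_subset_inter_left _ (subset_FS D))⟩
  simp only [not_exists, Set.not_infinite] at h
  obtain ⟨d₀, hd₀, hd₀0 : d₀ ≠ 0⟩ := (hD.sdiff (Set.finite_singleton 0)).nonempty
  set k := d₀.factorization 2
  have hd₀k : d₀ ∈ Awit k := mem_Awit_iff.2 ⟨hd₀0, rfl⟩
  have hlow : ({0} ∪ ⋃ j ∈ Set.Iic k, D ∩ Awit j).Finite :=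
    (Set.finite_singleton 0).union ((Set.finite_Iic k).biUnion fun j _ => h j)
  refine ⟨k, ((hD.sdiff hlow).image (add_right_injective d₀).injOn).mono ?_⟩
  rintro _ ⟨d, ⟨hdD, hd⟩, rfl⟩
  simp only [Set.mem_union, Set.mem_singleton_iff, Set.mem_iUnion, Set.mem_Iic, not_or,
    not_exists] at hd
  obtain ⟨hd0, hdhigh⟩ := hd
  have hdAwit : d ∈ Awit (d.factorization 2) := mem_Awit_iff.2 ⟨hd0, rfl⟩
  have hkd : k < d.factorization 2 := by
    by_contra hle
    exact hdhigh _ (not_lt.1 hle) ⟨hdD, hdAwit⟩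
  have hne : d₀ ≠ d := by rintro rfl; exact hkd.ne rfl
  exact ⟨add_mem_FS hd₀ hdD hne, add_mem_Awit_of_lt hd₀k hdAwit hkd⟩

/-- The Hindman ideal is not `P⁻(ω)`: the sets `A_k = {2^k(2n+1) : n ∈ ω}` form a
partition of the positive integers, each `A_k ∈ H`, but every IP-set `B` has infinite
intersection with some `A_k`. -/
theorem hindman_not_Pminus :
    (⋃ k, Awit k) = {m : ℕ | 0 < m} ∧
    (∀ k l, k ≠ l → Disjoint (Awit k) (Awit l)) ∧
    (∀ k, Awit k ∈ HindmanIdeal) ∧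
    (∀ B : Set ℕ, B ∉ HindmanIdeal → ∃ k, (B ∩ Awit k).Infinite) := by
  refine ⟨iUnion_Awit, fun _ _ h => pairwise_disjoint_Awit h, Awit_mem_HindmanIdeal,
    fun B hB => ?_⟩
  obtain ⟨D, hD, hFS⟩ := not_not.1 hB
  obtain ⟨k, hk⟩ := exists_infinite_FS_inter_Awit hD
  exact ⟨k, hk.mono (Set.inter_subset_inter_left _ hFS)⟩
end
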